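/- Discrete quadratic lower bound for the local energy: let Q ⊂ ℝ^d be a bounded Lipschitz domain and let A, H, κ be as in the context with 0 < λ_A < λ_H. For every ε > 0, all u, û: εℤ^d → ℝ^d vanishing outside Q_ε and all z, ẑ: εℤ^d → ℝ^{d×d} with symmetric values vanishing outside Q_ε, writing Δe = ∇^s_ε u − ∇^s_ε û − (z − ẑ), ê = ∇^s_ε û − ẑ and Δz = z − ẑ, one has E^loc_ε(u,z) − E^loc_ε(û,ẑ) − 2 ε^d Σ_{x ∈ εℤ^d} [ ê(x):A(x):Δe(x) + Δz(x):H(x):ẑ(x) + κ ∇_ε ẑ(x):(∇_ε z(x) − ∇_ε ẑ(x)) ] ≥ min(λ_A/2, λ_H − λ_A, κ) · ε^d Σ_{x ∈ εℤ^d} ( |∇^s_ε u(x) − ∇^s_ε û(x)|² + |Δz(x)|² + |∇_ε z(x) − ∇_ε ẑ(x)|² ). -/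
import Mathlib


/-!
**STATEMENT 18 (Discrete quadratic lower bound for the local energy).**
Let `Q ⊂ ℝ^d` be a bounded (Lipschitz) domain and `A, H, κ` as in the context with
`0 < λ_A < λ_H`.  For every `ε > 0`, all `u, û : εℤ^d → ℝ^d` vanishing outside `Q_ε`
and all `z, ẑ : εℤ^d → ℝ^{d×d}` with symmetric values vanishing outside `Q_ε`,
writing `Δe = ∇^s_ε u − ∇^s_ε û − (z − ẑ)`, `ê = ∇^s_ε û − ẑ`, `Δz = z − ẑ`:

`E^loc_ε(u,z) − E^loc_ε(û,ẑ) − 2 ε^d Σ_x [ ê:A:Δe + Δz:H:ẑ + κ ∇_ε ẑ:(∇_ε z − ∇_ε ẑ) ]`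
`≥ min(λ_A/2, λ_H−λ_A, κ) · ε^d Σ_x ( |∇^s_ε u − ∇^s_ε û|² + |Δz|² + |∇_ε z − ∇_ε ẑ|² )`.

Lattice functions are indexed by `ℤ^d` (the lattice point `z` sits at `ε·z`);
fourth-order tensors are modelled as linear maps on `d×d` matrices.  `Q` is a bounded
nonempty open set (boundary Lipschitz regularity is not formalizable in current
Mathlib and is irrelevant here).
-/

noncomputable section

def latticePos {d : ℕ} (ε : ℝ) (z : Fin d → ℤ) : Fin d → ℝ := fun i => ε * (z i : ℝ)

def dgradM {d : ℕ} (ε : ℝ) (u : (Fin d → ℤ) → (Fin d → ℝ)) (z : Fin d → ℤ) :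
    Fin d → Fin d → ℝ :=
  fun i j => (u (z + Pi.single j 1) i - u z i) / ε

def symPart {d : ℕ} (M : Fin d → Fin d → ℝ) : Fin d → Fin d → ℝ :=
  fun i j => (M i j + M j i) / 2

def frobSq {d : ℕ} (M : Fin d → Fin d → ℝ) : ℝ := ∑ i, ∑ j, (M i j) ^ 2

def mcon {d : ℕ} (M N : Fin d → Fin d → ℝ) : ℝ := ∑ i, ∑ j, M i j * N i j

/-- `k`-th slice of the discrete gradient of a matrix field: `∂ₖ^ε P`. -/
def dgradK {d : ℕ} (ε : ℝ) (P : (Fin d → ℤ) → (Fin d → Fin d → ℝ)) (k : Fin d)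
    (z : Fin d → ℤ) : Fin d → Fin d → ℝ :=
  ε⁻¹ • (P (z + Pi.single k 1) - P z)

/-- Squared Frobenius norm `|∇_ε P|²` of the discrete gradient of a matrix field. -/
def dgradMSq {d : ℕ} (ε : ℝ) (P : (Fin d → ℤ) → (Fin d → Fin d → ℝ)) (z : Fin d → ℤ) : ℝ :=
  ∑ k, frobSq (dgradK ε P k z)

/-- Discrete local elastoplastic energy `E^loc_ε(u,z)`. -/
def ElocEps {d : ℕ} (ε : ℝ)
    (A H : (Fin d → ℤ) → (Fin d → Fin d → ℝ) →ₗ[ℝ] (Fin d → Fin d → ℝ)) (κ : ℝ)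
    (u : (Fin d → ℤ) → (Fin d → ℝ)) (P : (Fin d → ℤ) → (Fin d → Fin d → ℝ)) : ℝ :=
  ε ^ d * ∑' z : Fin d → ℤ,
    (mcon (symPart (dgradM ε u z) - P z) (A z (symPart (dgradM ε u z) - P z))
      + mcon (P z) (H z (P z)) + κ * dgradMSq ε P z)

namespace DQLBaux

variable {d : ℕ}

lemma frobSq_nonneg (M : Fin d → Fin d → ℝ) : 0 ≤ frobSq M :=
  Finset.sum_nonneg fun _ _ => Finset.sum_nonneg fun _ _ => sq_nonneg _

lemma mcon_add_left (M N P : Fin d → Fin d → ℝ) : mcon (M + N) P = mcon M P + mcon N P := by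
  simp [mcon, add_mul, Finset.sum_add_distrib]

lemma mcon_add_right (M N P : Fin d → Fin d → ℝ) : mcon M (N + P) = mcon M N + mcon M P := by
  simp [mcon, mul_add, Finset.sum_add_distrib]

lemma mcon_comm (M N : Fin d → Fin d → ℝ) : mcon M N = mcon N M := by
  simp [mcon, mul_comm]

lemma frobSq_eq (M : Fin d → Fin d → ℝ) : frobSq M = mcon M M := by
  simp [frobSq, mcon, sq]

lemma mcon_neg_right (M N : Fin d → Fin d → ℝ) : mcon M (-N) = -mcon M N := by
  simp [mcon, Finset.sum_neg_distrib]

lemma frobSq_neg (M : Fin d → Fin d → ℝ) : frobSq (-M) = frobSq M := by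
  simp [frobSq]

lemma quad_key (B : (Fin d → Fin d → ℝ) →ₗ[ℝ] (Fin d → Fin d → ℝ))
    (hB : ∀ M N, mcon M (B N) = mcon N (B M)) (a b : Fin d → Fin d → ℝ) :
    mcon (a + b) (B (a + b)) = mcon a (B a) + 2 * mcon a (B b) + mcon b (B b) := by
  rw [map_add, mcon_add_left, mcon_add_right, mcon_add_right, hB b a]; ring

lemma frobSq_add (a b : Fin d → Fin d → ℝ) :
    frobSq (a + b) = frobSq a + 2 * mcon a b + frobSq b := by
  rw [frobSq_eq, frobSq_eq, frobSq_eq, mcon_add_left, mcon_add_right, mcon_add_right,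
    mcon_comm b a]; ring

lemma frobSq_sub (a b : Fin d → Fin d → ℝ) :
    frobSq (a - b) = frobSq a - 2 * mcon a b + frobSq b := by
  rw [sub_eq_add_neg, frobSq_add, mcon_neg_right, frobSq_neg]; ring

lemma mcon_le (a b : Fin d → Fin d → ℝ) : mcon a b ≤ frobSq a / 4 + frobSq b := by
  simp only [mcon, frobSq]
  rw [Finset.sum_div, ← Finset.sum_add_distrib]
  refine Finset.sum_le_sum fun i _ => ?_
  rw [Finset.sum_div, ← Finset.sum_add_distrib]
  refine Finset.sum_le_sum fun j _ => ?_
  nlinarith [sq_nonneg (a i j - 2 * b i j)]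

lemma young (a b : Fin d → Fin d → ℝ) : frobSq a / 2 - frobSq b ≤ frobSq (a - b) := by
  have h := mcon_le a b; rw [frobSq_sub]; linarith

lemma pointwise (lamA lamH κ : ℝ) (hlamA : 0 < lamA)
    (A H : (Fin d → Fin d → ℝ) →ₗ[ℝ] (Fin d → Fin d → ℝ))
    (hAsym : ∀ M N, mcon M (A N) = mcon N (A M))
    (hHsym : ∀ M N, mcon M (H N) = mcon N (H M))
    (hA : ∀ M, lamA * frobSq M ≤ mcon M (A M))
    (hH : ∀ M, lamH * frobSq M ≤ mcon M (H M))
    (s sh p ph : Fin d → Fin d → ℝ) (g gh : Fin d → Fin d → Fin d → ℝ) :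
    min (lamA / 2) (min (lamH - lamA) κ) *
        (frobSq (s - sh) + frobSq (p - ph) + ∑ k, frobSq (g k - gh k)) ≤
      (mcon (s - p) (A (s - p)) + mcon p (H p) + κ * ∑ k, frobSq (g k))
        - (mcon (sh - ph) (A (sh - ph)) + mcon ph (H ph) + κ * ∑ k, frobSq (gh k))
        - 2 * (mcon (sh - ph) (A (s - sh - (p - ph))) + mcon (p - ph) (H ph)
            + κ * ∑ k, mcon (gh k) (g k - gh k)) := by
  set m := min (lamA / 2) (min (lamH - lamA) κ) with hm
  set Δe := s - sh - (p - ph) with hΔe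
  have eA := quad_key A hAsym (sh - ph) Δe
  rw [show sh - ph + Δe = s - p by rw [hΔe]; abel] at eA
  have eH := quad_key H hHsym ph (p - ph)
  rw [show ph + (p - ph) = p by abel] at eH
  have eG : ∀ k : Fin d, frobSq (g k) =
      frobSq (gh k) + 2 * mcon (gh k) (g k - gh k) + frobSq (g k - gh k) := by
    intro k
    have h := frobSq_add (gh k) (g k - gh k)
    rwa [show gh k + (g k - gh k) = g k by abel] at h
  have eGsum : ∑ k, frobSq (g k) = ∑ k, frobSq (gh k)
      + 2 * ∑ k, mcon (gh k) (g k - gh k) + ∑ k, frobSq (g k - gh k) := by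
    rw [Finset.mul_sum, ← Finset.sum_add_distrib, ← Finset.sum_add_distrib]
    exact Finset.sum_congr rfl fun k _ => eG k
  have hcross : mcon (p - ph) (H ph) = mcon ph (H (p - ph)) := hHsym _ _
  rw [eA, eH, eGsum, hcross]
  have hm1 : m ≤ lamA / 2 := min_le_left _ _
  have hm2 : m ≤ lamH - lamA := le_trans (min_le_right _ _) (min_le_left _ _)
  have hm3 : m ≤ κ := le_trans (min_le_right _ _) (min_le_right _ _)
  have hX := frobSq_nonneg (s - sh)
  have hY := frobSq_nonneg (p - ph)
  have hSG : (0:ℝ) ≤ ∑ k, frobSq (g k - gh k) :=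
    Finset.sum_nonneg fun k _ => frobSq_nonneg _
  have hbA := hA Δe
  have hbH := hH (p - ph)
  have hy : frobSq (s - sh) / 2 - frobSq (p - ph) ≤ frobSq Δe := young _ _
  nlinarith [mul_le_mul_of_nonneg_right hm1 hX, mul_le_mul_of_nonneg_right hm2 hY,
    mul_le_mul_of_nonneg_right hm3 hSG, mul_le_mul_of_nonneg_left hy hlamA.le]

end DQLBaux

open DQLBaux in
theorem discrete_quadratic_lower_bound_local_energy
    (d : ℕ) (hd : 1 ≤ d) (Q : Set (Fin d → ℝ))
    (hQopen : IsOpen Q) (hQne : Q.Nonempty) (hQbdd : Bornology.IsBounded Q)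
    (lamA lamH κ : ℝ) (hlamA : 0 < lamA) (hlamAH : lamA < lamH) (hκ : 0 < κ)
    (A H : (Fin d → ℤ) → (Fin d → Fin d → ℝ) →ₗ[ℝ] (Fin d → Fin d → ℝ))
    (hAsym : ∀ z M N, mcon M (A z N) = mcon N (A z M))
    (hHsym : ∀ z M N, mcon M (H z N) = mcon N (H z M))
    (hA : ∀ z M, lamA * frobSq M ≤ mcon M (A z M))
    (hH : ∀ z M, lamH * frobSq M ≤ mcon M (H z M))
    (ε : ℝ) (hε : 0 < ε)
    (u uh : (Fin d → ℤ) → (Fin d → ℝ))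
    (hu : ∀ z : Fin d → ℤ, latticePos ε z ∉ Q → u z = 0)
    (huh : ∀ z : Fin d → ℤ, latticePos ε z ∉ Q → uh z = 0)
    (P Ph : (Fin d → ℤ) → (Fin d → Fin d → ℝ))
    (hPsym : ∀ z : Fin d → ℤ, ∀ i j, P z i j = P z j i)
    (hPhsym : ∀ z : Fin d → ℤ, ∀ i j, Ph z i j = Ph z j i)
    (hP : ∀ z : Fin d → ℤ, latticePos ε z ∉ Q → P z = 0)
    (hPh : ∀ z : Fin d → ℤ, latticePos ε z ∉ Q → Ph z = 0) :
    min (lamA / 2) (min (lamH - lamA) κ) *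
        (ε ^ d * ∑' z : Fin d → ℤ,
          (frobSq (symPart (dgradM ε u z) - symPart (dgradM ε uh z))
            + frobSq (P z - Ph z)
            + ∑ k, frobSq (dgradK ε P k z - dgradK ε Ph k z))) ≤
      ElocEps ε A H κ u P - ElocEps ε A H κ uh Ph -
        2 * (ε ^ d * ∑' z : Fin d → ℤ,
          (mcon (symPart (dgradM ε uh z) - Ph z)
              (A z (symPart (dgradM ε u z) - symPart (dgradM ε uh z) - (P z - Ph z)))
            + mcon (P z - Ph z) (H z (Ph z))
            + κ * ∑ k, mcon (dgradK ε Ph k z) (dgradK ε P k z - dgradK ε Ph k z))) := by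
  classical
  -- the set of lattice points whose position lies in `Q` is finite
  have hSfin : Set.Finite {z : Fin d → ℤ | latticePos ε z ∈ Q} := by
    obtain ⟨R, hR⟩ := hQbdd.subset_closedBall 0
    set N : ℤ := ⌈R / ε⌉ with hN
    apply Set.Finite.subset (Set.finite_Icc (fun _ => -N) (fun _ => N))
    intro z hz
    have hball := hR hz
    rw [Metric.mem_closedBall, dist_zero_right] at hball
    have hcoord : ∀ i, -N ≤ z i ∧ z i ≤ N := by
      intro i
      have h1 : ‖latticePos ε z i‖ ≤ ‖latticePos ε z‖ := norm_le_pi_norm _ i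
      have h2 : |ε| * |(z i : ℝ)| ≤ R := by
        simpa [latticePos, Real.norm_eq_abs, abs_mul] using h1.trans hball
      rw [abs_of_pos hε] at h2
      have h3 : |(z i : ℝ)| ≤ R / ε := by
        rw [le_div_iff₀ hε]; nlinarith [abs_nonneg ((z i : ℝ))]
      have h4 : |(z i : ℝ)| ≤ (N : ℝ) := h3.trans (Int.le_ceil _)
      rw [abs_le] at h4
      constructor <;> [exact_mod_cast h4.1; exact_mod_cast h4.2]
    rw [Set.mem_Icc]
    exact ⟨fun i => (hcoord i).1, fun i => (hcoord i).2⟩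
  set Sset : Set (Fin d → ℤ) := {z : Fin d → ℤ | latticePos ε z ∈ Q} with hSs
  have hTfin : Set.Finite (Sset ∪ ⋃ j : Fin d, (fun w => w - Pi.single j 1) '' Sset) :=
    hSfin.union (Set.finite_iUnion fun j => hSfin.image _)
  set Tf : Finset (Fin d → ℤ) := hTfin.toFinset with hTf
  have hmem : ∀ z : Fin d → ℤ, z ∉ Tf →
      latticePos ε z ∉ Q ∧ ∀ j : Fin d, latticePos ε (z + Pi.single j 1) ∉ Q := by
    intro z hz
    rw [hTf, Set.Finite.mem_toFinset] at hz
    constructor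
    · exact fun h => hz (Or.inl h)
    · intro j h
      exact hz (Or.inr (Set.mem_iUnion.mpr ⟨j, ⟨z + Pi.single j 1, h, by simp⟩⟩))
  have hvan : ∀ z : Fin d → ℤ, z ∉ Tf →
      symPart (dgradM ε u z) = 0 ∧ symPart (dgradM ε uh z) = 0 ∧ P z = 0 ∧ Ph z = 0 ∧
      (∀ k, dgradK ε P k z = 0) ∧ (∀ k, dgradK ε Ph k z = 0) := by
    intro z hz
    obtain ⟨h0, hj⟩ := hmem z hz
    have hgu : dgradM ε u z = 0 := by
      funext i j; simp [dgradM, hu z h0, hu _ (hj j)]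
    have hguh : dgradM ε uh z = 0 := by
      funext i j; simp [dgradM, huh z h0, huh _ (hj j)]
    refine ⟨?_, ?_, hP z h0, hPh z h0, fun k => ?_, fun k => ?_⟩
    · funext i j; simp [symPart, hgu]
    · funext i j; simp [symPart, hguh]
    · simp [dgradK, hP z h0, hP _ (hj k)]
    · simp [dgradK, hPh z h0, hPh _ (hj k)]
  -- rewrite the four tsums as finite sums over Tf
  have e1 : (∑' z : Fin d → ℤ,
      (frobSq (symPart (dgradM ε u z) - symPart (dgradM ε uh z))
        + frobSq (P z - Ph z)
        + ∑ k, frobSq (dgradK ε P k z - dgradK ε Ph k z))) =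
      ∑ z ∈ Tf, (frobSq (symPart (dgradM ε u z) - symPart (dgradM ε uh z))
        + frobSq (P z - Ph z)
        + ∑ k, frobSq (dgradK ε P k z - dgradK ε Ph k z)) := by
    refine tsum_eq_sum fun z hz => ?_
    obtain ⟨h1, h2, h3, h4, h5, h6⟩ := hvan z hz
    simp [h1, h2, h3, h4, h5, h6, frobSq]
  have e2 : (∑' z : Fin d → ℤ,
      (mcon (symPart (dgradM ε u z) - P z) (A z (symPart (dgradM ε u z) - P z))
        + mcon (P z) (H z (P z)) + κ * dgradMSq ε P z)) =
      ∑ z ∈ Tf, (mcon (symPart (dgradM ε u z) - P z) (A z (symPart (dgradM ε u z) - P z))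
        + mcon (P z) (H z (P z)) + κ * dgradMSq ε P z) := by
    refine tsum_eq_sum fun z hz => ?_
    obtain ⟨h1, h2, h3, h4, h5, h6⟩ := hvan z hz
    simp [h1, h3, h5, dgradMSq, frobSq, mcon]
  have e3 : (∑' z : Fin d → ℤ,
      (mcon (symPart (dgradM ε uh z) - Ph z) (A z (symPart (dgradM ε uh z) - Ph z))
        + mcon (Ph z) (H z (Ph z)) + κ * dgradMSq ε Ph z)) =
      ∑ z ∈ Tf, (mcon (symPart (dgradM ε uh z) - Ph z) (A z (symPart (dgradM ε uh z) - Ph z))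
        + mcon (Ph z) (H z (Ph z)) + κ * dgradMSq ε Ph z) := by
    refine tsum_eq_sum fun z hz => ?_
    obtain ⟨h1, h2, h3, h4, h5, h6⟩ := hvan z hz
    simp [h2, h4, h6, dgradMSq, frobSq, mcon]
  have e4 : (∑' z : Fin d → ℤ,
      (mcon (symPart (dgradM ε uh z) - Ph z)
          (A z (symPart (dgradM ε u z) - symPart (dgradM ε uh z) - (P z - Ph z)))
        + mcon (P z - Ph z) (H z (Ph z))
        + κ * ∑ k, mcon (dgradK ε Ph k z) (dgradK ε P k z - dgradK ε Ph k z))) =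
      ∑ z ∈ Tf, (mcon (symPart (dgradM ε uh z) - Ph z)
          (A z (symPart (dgradM ε u z) - symPart (dgradM ε uh z) - (P z - Ph z)))
        + mcon (P z - Ph z) (H z (Ph z))
        + κ * ∑ k, mcon (dgradK ε Ph k z) (dgradK ε P k z - dgradK ε Ph k z)) := by
    refine tsum_eq_sum fun z hz => ?_
    obtain ⟨h1, h2, h3, h4, h5, h6⟩ := hvan z hz
    simp [h1, h2, h3, h4, h5, h6, mcon]
  simp only [ElocEps]
  rw [e1, e2, e3, e4]
  have hpt : ∀ z ∈ Tf,
      min (lamA / 2) (min (lamH - lamA) κ) *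
        (frobSq (symPart (dgradM ε u z) - symPart (dgradM ε uh z))
          + frobSq (P z - Ph z)
          + ∑ k, frobSq (dgradK ε P k z - dgradK ε Ph k z)) ≤
      (mcon (symPart (dgradM ε u z) - P z) (A z (symPart (dgradM ε u z) - P z))
          + mcon (P z) (H z (P z)) + κ * dgradMSq ε P z)
        - (mcon (symPart (dgradM ε uh z) - Ph z) (A z (symPart (dgradM ε uh z) - Ph z))
          + mcon (Ph z) (H z (Ph z)) + κ * dgradMSq ε Ph z)
        - 2 * (mcon (symPart (dgradM ε uh z) - Ph z)
              (A z (symPart (dgradM ε u z) - symPart (dgradM ε uh z) - (P z - Ph z)))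
            + mcon (P z - Ph z) (H z (Ph z))
            + κ * ∑ k, mcon (dgradK ε Ph k z) (dgradK ε P k z - dgradK ε Ph k z)) := by
    intro z _
    simp only [dgradMSq]
    exact pointwise lamA lamH κ hlamA (A z) (H z) (hAsym z) (hHsym z) (hA z) (hH z)
      (symPart (dgradM ε u z)) (symPart (dgradM ε uh z)) (P z) (Ph z)
      (fun k => dgradK ε P k z) (fun k => dgradK ε Ph k z)
  calc min (lamA / 2) (min (lamH - lamA) κ) *
        (ε ^ d * ∑ z ∈ Tf, (frobSq (symPart (dgradM ε u z) - symPart (dgradM ε uh z))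
          + frobSq (P z - Ph z) + ∑ k, frobSq (dgradK ε P k z - dgradK ε Ph k z)))
      = ε ^ d * ∑ z ∈ Tf, (min (lamA / 2) (min (lamH - lamA) κ) *
          (frobSq (symPart (dgradM ε u z) - symPart (dgradM ε uh z))
          + frobSq (P z - Ph z) + ∑ k, frobSq (dgradK ε P k z - dgradK ε Ph k z))) := by
        rw [← Finset.mul_sum]; ring
    _ ≤ ε ^ d * ∑ z ∈ Tf,
          ((mcon (symPart (dgradM ε u z) - P z) (A z (symPart (dgradM ε u z) - P z))
              + mcon (P z) (H z (P z)) + κ * dgradMSq ε P z)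
            - (mcon (symPart (dgradM ε uh z) - Ph z) (A z (symPart (dgradM ε uh z) - Ph z))
              + mcon (Ph z) (H z (Ph z)) + κ * dgradMSq ε Ph z)
            - 2 * (mcon (symPart (dgradM ε uh z) - Ph z)
                  (A z (symPart (dgradM ε u z) - symPart (dgradM ε uh z) - (P z - Ph z)))
                + mcon (P z - Ph z) (H z (Ph z))
                + κ * ∑ k, mcon (dgradK ε Ph k z) (dgradK ε P k z - dgradK ε Ph k z))) := by
        refine mul_le_mul_of_nonneg_left (Finset.sum_le_sum hpt) (by positivity)
    _ = ε ^ d * ∑ z ∈ Tf, (mcon (symPart (dgradM ε u z) - P z)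
            (A z (symPart (dgradM ε u z) - P z))
          + mcon (P z) (H z (P z)) + κ * dgradMSq ε P z)
        - ε ^ d * ∑ z ∈ Tf, (mcon (symPart (dgradM ε uh z) - Ph z)
            (A z (symPart (dgradM ε uh z) - Ph z))
          + mcon (Ph z) (H z (Ph z)) + κ * dgradMSq ε Ph z)
        - 2 * (ε ^ d * ∑ z ∈ Tf, (mcon (symPart (dgradM ε uh z) - Ph z)
              (A z (symPart (dgradM ε u z) - symPart (dgradM ε uh z) - (P z - Ph z)))
            + mcon (P z - Ph z) (H z (Ph z))
            + κ * ∑ k, mcon (dgradK ε Ph k z) (dgradK ε P k z - dgradK ε Ph k z))) := by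
        rw [Finset.sum_sub_distrib, Finset.sum_sub_distrib, ← Finset.mul_sum]
        ring
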